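/- Let E be a compact convex effect space with zero o and unit u, and let e be an extremal point of E such that the segment [o,e] is an edge of E (i.e., a face of E). Then the lower set {e' ∈ E : o ≤ e' ≤ e} equals the segment [o,e]. -/

import Mathlib

/-!
If `0 ≤ e' ≤ e`, then `e'` and `e - e'` are both effects, and their midpoint `e / 2` lies on the
edge `[0, e]`; since the edge is a face, `e'` lies on it too. Conversely every point `t • e` of the
edge is an effect squeezed between `0` and `e`.
-/

theorem IsExtreme.mem_segment_zero_of_sub_mem {𝕜 W : Type*} [Ring 𝕜] [LinearOrder 𝕜]
    [IsStrictOrderedRing 𝕜] [Invertible (2 : 𝕜)] [AddCommGroup W] [Module 𝕜 W] {A : Set W}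
    {e x : W} (h : IsExtreme 𝕜 A (segment 𝕜 0 e)) (hx : x ∈ A) (hex : e - x ∈ A) :
    x ∈ segment 𝕜 0 e := by
  have hmid : midpoint 𝕜 x (e - x) = midpoint 𝕜 0 e := by
    simp only [midpoint_eq_smul_add, add_sub_cancel, zero_add]
  refine h.left_mem_of_mem_openSegment hx hex (midpoint_mem_segment 0 e) ?_
  exact hmid ▸ midpoint_mem_openSegment x (e - x)

section Effects

variable {V : Type*} [AddCommGroup V] [Module ℝ V]

def effects (S : Set V) : Set (V →ᵃ[ℝ] ℝ) := {f | ∀ ω ∈ S, 0 ≤ f ω ∧ f ω ≤ 1}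

theorem sub_mem_effects {S : Set V} {e f : V →ᵃ[ℝ] ℝ} (he : e ∈ effects S)
    (hfe : ∀ ω ∈ S, 0 ≤ f ω ∧ f ω ≤ e ω) : e - f ∈ effects S := fun ω hω => by
  have := he ω hω
  have := hfe ω hω
  simp only [AffineMap.coe_sub, Pi.sub_apply]
  constructor <;> linarith

theorem apply_mem_Icc_of_mem_segment_zero {e f : V →ᵃ[ℝ] ℝ} (hf : f ∈ segment ℝ 0 e) {ω : V}
    (hω : 0 ≤ e ω) : 0 ≤ f ω ∧ f ω ≤ e ω := by
  obtain ⟨a, t, ha, ht, hat, rfl⟩ := hf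
  simp only [smul_zero, zero_add, AffineMap.coe_smul, Pi.smul_apply, smul_eq_mul]
  exact ⟨mul_nonneg ht hω, mul_le_of_le_one_left hω (by linarith)⟩

end Effects

theorem lowerSet_eq_segment_of_edge_general
    {V : Type*} [NormedAddCommGroup V] [NormedSpace ℝ V]
    (S : Set V)
    (E : Set (V →ᵃ[ℝ] ℝ))
    (hE : E = {f : V →ᵃ[ℝ] ℝ | ∀ ω ∈ S, 0 ≤ f ω ∧ f ω ≤ 1})
    (e : V →ᵃ[ℝ] ℝ)
    (hedge : IsExtreme ℝ E (segment ℝ 0 e)) :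
    {e' ∈ E | ∀ ω ∈ S, 0 ≤ e' ω ∧ e' ω ≤ e ω} = segment ℝ 0 e := by
  change E = effects S at hE
  subst hE
  have heE : e ∈ effects S := hedge.subset (right_mem_segment ℝ 0 e)
  ext f
  constructor
  · rintro ⟨hf, hfe⟩
    exact hedge.mem_segment_zero_of_sub_mem hf (sub_mem_effects heE hfe)
  · intro hf
    exact ⟨hedge.subset hf, fun ω hω => apply_mem_Icc_of_mem_segment_zero hf (heE ω hω).1⟩

/-- if `e` is extremal and the segment `[o, e]` is an edge (a face) of
`E`, then the lower set of `e` equals `[o, e]`. -/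
theorem lowerSet_eq_segment_of_edge
    {V : Type*} [NormedAddCommGroup V] [NormedSpace ℝ V] [FiniteDimensional ℝ V]
    (S : Set V) (hS : IsCompact S) (hconv : Convex ℝ S)
    (E : Set (V →ᵃ[ℝ] ℝ))
    (hE : E = {f : V →ᵃ[ℝ] ℝ | ∀ ω ∈ S, 0 ≤ f ω ∧ f ω ≤ 1})
    (e : V →ᵃ[ℝ] ℝ) (he : e ∈ Set.extremePoints ℝ E)
    (hedge : IsExtreme ℝ E (segment ℝ 0 e)) :
    {e' ∈ E | ∀ ω ∈ S, 0 ≤ e' ω ∧ e' ω ≤ e ω} = segment ℝ 0 e :=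
  lowerSet_eq_segment_of_edge_general S E hE e hedge
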